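/- arXiv:1706.05580 — 3 statements merged into one kernel-verified Lean document; each statement's English description precedes it below -/
import Mathlib

section
/- The regular thickening surface of the complete bipartite ribbon graph K_{p,q} (with cyclic orders induced by cyclic orders on the two vertex classes) has exactly gcd(p,q) boundary components and genus ((p-1)(q-1) - gcd(p,q) + 1)/2. -/
/-!
STATEMENT 0. The complete bipartite ribbon graph `K_{p,q}` is encoded by its darts
(half-edges): a dart is a pair `((a, b), s)` with `a : ZMod p`, `b : ZMod q`,
where `s = true` means the half-edge of the edge `(a,b)` at the `A`-vertex `a`
and `s = false` the half-edge at the `B`-vertex `b`.  The cyclic orders on the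
two vertex classes give the vertex rotation, and the boundary components of the
regular thickening are the orbits of the face permutation
`φ = (vertex rotation) ∘ (edge involution)`, explicitly
`φ((a,b),true) = ((a+1,b),false)` and `φ((a,b),false) = ((a,b+1),true)`.
The theorem: the number of boundary components is `gcd p q`, and the genus `g`
determined by the Euler relation `V - E + F = 2 - 2g` equals
`((p-1)(q-1) - gcd(p,q) + 1)/2`. -/

/-- The face permutation of the ribbon graph `K_{p,q}`, acting on darts. -/
def facePerm (p q : ℕ) : Equiv.Perm ((ZMod p × ZMod q) × Bool) where
  toFun x := match x with
    | ((a, b), true) => ((a + 1, b), false)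
    | ((a, b), false) => ((a, b + 1), true)
  invFun x := match x with
    | ((a, b), false) => ((a - 1, b), true)
    | ((a, b), true) => ((a, b - 1), false)
  left_inv := by rintro ⟨⟨a, b⟩, (_ | _)⟩ <;> simp
  right_inv := by rintro ⟨⟨a, b⟩, (_ | _)⟩ <;> simp

/-- The set of boundary components of the thickening: orbits of the face
permutation, i.e. orbits of the action of the cyclic group generated by it. -/
def boundaryComponents (p q : ℕ) : Type :=
  MulAction.orbitRel.Quotient (Subgroup.zpowers (facePerm p q))
    ((ZMod p × ZMod q) × Bool)

/-! The label `a - b - [s = false] ∈ ZMod (gcd p q)` of a dart `((a, b), s)` is invariant under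
the face permutation `φ`. Conversely, every face contains a dart `((a, b), true)`, and on these
darts `φ²` is the translation by `(1, 1)`; by Bézout, an integer `k` with `k ≡ a - a' (mod p)` and
`k ≡ b - b' (mod q)` exists exactly when `a - b ≡ a' - b' (mod gcd p q)`. So the faces correspond
bijectively to the labels, and the genus follows from the Euler relation. -/

namespace ZMod

theorem exists_intCast_eq_of_castHom_gcd_eq {p q : ℕ} {x : ZMod p} {y : ZMod q}
    (h : castHom (Nat.gcd_dvd_left p q) (ZMod (p.gcd q)) x =
      castHom (Nat.gcd_dvd_right p q) (ZMod (p.gcd q)) y) :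
    ∃ k : ℤ, (k : ZMod p) = x ∧ (k : ZMod q) = y := by
  obtain ⟨m, rfl⟩ := intCast_surjective x
  obtain ⟨n, rfl⟩ := intCast_surjective y
  simp only [map_intCast, intCast_eq_intCast_iff_dvd_sub] at h
  obtain ⟨t, ht⟩ := h
  -- Bézout: `n - m = gcd p q * t = p * (gcdA p q * t) + q * (gcdB p q * t)`.
  refine ⟨m + p * (p.gcdA q * t), ?_, ?_⟩
  · simp
  · rw [intCast_eq_intCast_iff_dvd_sub]
    exact ⟨p.gcdB q * t, by rw [Nat.gcd_eq_gcd_ab] at ht; linear_combination ht⟩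

end ZMod

section

variable (p q : ℕ)

def faceLabel (x : (ZMod p × ZMod q) × Bool) : ZMod (p.gcd q) :=
  ZMod.castHom (Nat.gcd_dvd_left p q) _ x.1.1 - ZMod.castHom (Nat.gcd_dvd_right p q) _ x.1.2
    - if x.2 then 0 else 1

theorem faceLabel_facePerm (x : (ZMod p × ZMod q) × Bool) :
    faceLabel p q (facePerm p q x) = faceLabel p q x := by
  rcases x with ⟨⟨a, b⟩, _ | _⟩ <;>
    simp only [faceLabel, facePerm, Equiv.coe_fn_mk, map_add, map_one, Bool.false_eq_true,
      ↓reduceIte] <;>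
    ring

theorem faceLabel_zpow_facePerm (n : ℤ) (x : (ZMod p × ZMod q) × Bool) :
    faceLabel p q ((facePerm p q ^ n) x) = faceLabel p q x := by
  induction n using Int.induction_on generalizing x with
  | zero => rfl
  | succ n ih => rw [zpow_add_one, Equiv.Perm.mul_apply, ih, faceLabel_facePerm]
  | pred n ih =>
    rw [zpow_sub_one, Equiv.Perm.mul_apply, ih, ← faceLabel_facePerm, ← Equiv.Perm.mul_apply,
      mul_inv_cancel, Equiv.Perm.one_apply]

theorem facePerm_sq_apply_true (a : ZMod p) (b : ZMod q) :
    (facePerm p q ^ 2) ((a, b), true) = ((a + 1, b + 1), true) := rfl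

theorem facePerm_zpow_two_mul_apply_true (k : ℤ) (a : ZMod p) (b : ZMod q) :
    (facePerm p q ^ (2 * k)) ((a, b), true) = ((a + k, b + k), true) := by
  rw [zpow_mul, zpow_ofNat]
  induction k using Int.induction_on generalizing a b with
  | zero => simp
  | succ k ih =>
    rw [zpow_add_one, Equiv.Perm.mul_apply, facePerm_sq_apply_true, ih]
    push_cast; ring_nf
  | pred k ih =>
    have h : (facePerm p q ^ 2)⁻¹ ((a, b), true) = ((a - 1, b - 1), true) := by
      rw [Equiv.Perm.inv_eq_iff_eq, facePerm_sq_apply_true, sub_add_cancel, sub_add_cancel]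
    rw [zpow_sub_one, Equiv.Perm.mul_apply, h, ih]
    push_cast; ring_nf

theorem faceLabel_eq_of_orbitRel {x y : (ZMod p × ZMod q) × Bool}
    (h : MulAction.orbitRel (Subgroup.zpowers (facePerm p q)) _ x y) :
    faceLabel p q x = faceLabel p q y := by
  obtain ⟨⟨_, n, rfl⟩, rfl⟩ := h
  exact faceLabel_zpow_facePerm p q n y

theorem orbitRel_true_of_faceLabel_eq {a a' : ZMod p} {b b' : ZMod q}
    (h : faceLabel p q ((a, b), true) = faceLabel p q ((a', b'), true)) :
    MulAction.orbitRel (Subgroup.zpowers (facePerm p q)) _ ((a, b), true) ((a', b'), true) := by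
  obtain ⟨k, hka, hkb⟩ := ZMod.exists_intCast_eq_of_castHom_gcd_eq (x := a - a') (y := b - b')
    (by simp only [faceLabel, map_sub] at h ⊢; linear_combination h)
  refine ⟨⟨_, Subgroup.zpow_mem _ (Subgroup.mem_zpowers _) (2 * k)⟩, ?_⟩
  change (facePerm p q ^ (2 * k)) ((a', b'), true) = ((a, b), true)
  rw [facePerm_zpow_two_mul_apply_true, hka, hkb, add_sub_cancel, add_sub_cancel]

def boundaryLabel : boundaryComponents p q → ZMod (p.gcd q) :=
  Quotient.lift (faceLabel p q) fun _ _ => faceLabel_eq_of_orbitRel p q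

theorem boundaryComponents.exists_mk_true_eq (c : boundaryComponents p q) :
    ∃ (a : ZMod p) (b : ZMod q), (Quotient.mk _ ((a, b), true) : boundaryComponents p q) = c := by
  induction c using Quotient.inductionOn with
  | h x =>
    rcases x with ⟨⟨a, b⟩, _ | _⟩
    · exact ⟨a, b + 1, Quotient.sound ⟨⟨facePerm p q, Subgroup.mem_zpowers _⟩, rfl⟩⟩
    · exact ⟨a, b, rfl⟩

theorem boundaryLabel_injective : Function.Injective (boundaryLabel p q) := by
  intro c c' h
  obtain ⟨a, b, rfl⟩ := boundaryComponents.exists_mk_true_eq p q c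
  obtain ⟨a', b', rfl⟩ := boundaryComponents.exists_mk_true_eq p q c'
  exact Quotient.sound (orbitRel_true_of_faceLabel_eq p q h)

theorem boundaryLabel_surjective : Function.Surjective (boundaryLabel p q) := by
  intro c
  obtain ⟨n, rfl⟩ := ZMod.intCast_surjective c
  exact ⟨Quotient.mk _ ((n, 0), true), by simp [boundaryLabel, faceLabel]⟩

-- For `p = q = 0` both sides are `0`: `ZMod 0 = ℤ` is infinite and `Nat.card` is then `0`.
theorem card_boundaryComponents : Nat.card (boundaryComponents p q) = p.gcd q := by
  rw [Nat.card_congr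
      (Equiv.ofBijective _ ⟨boundaryLabel_injective p q, boundaryLabel_surjective p q⟩),
    Nat.card_zmod]

end

theorem thickening_of_Kpq_boundary_and_genus_general (p q : ℕ) :
    Nat.card (boundaryComponents p q) = Nat.gcd p q ∧
    ∀ g : ℚ, -- the genus, determined by the Euler relation V - E + F = 2 - 2g
      ((p : ℚ) + q) - (p * q : ℚ) + Nat.card (boundaryComponents p q) = 2 - 2 * g →
      g = (((p : ℚ) - 1) * ((q : ℚ) - 1) - Nat.gcd p q + 1) / 2 := by
  refine ⟨card_boundaryComponents p q, fun g hEuler => ?_⟩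
  rw [card_boundaryComponents] at hEuler
  linear_combination hEuler / 2

theorem thickening_of_Kpq_boundary_and_genus (p q : ℕ) (hp : 0 < p) (hq : 0 < q) :
    Nat.card (boundaryComponents p q) = Nat.gcd p q ∧
    ∀ g : ℚ, -- the genus, determined by the Euler relation V - E + F = 2 - 2g
      ((p : ℚ) + q) - (p * q : ℚ) + Nat.card (boundaryComponents p q) = 2 - 2 * g →
      g = (((p : ℚ) - 1) * ((q : ℚ) - 1) - Nat.gcd p q + 1) / 2 :=
  thickening_of_Kpq_boundary_and_genus_general p q
end

section
/- If Γ is a metric ribbon graph homeomorphic to the circle S¹ satisfying the π-tête-à-tête property, then the induced homeomorphism σ_Γ is either the identity or the rotation by half the total length, and the total length of Γ is 2π/n for some positive integer n. -/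
/-! At `p = 0` the property reads `π = -π`, so `π` is a point of order dividing 2 in `ℝ/Lℤ`:
hence `2π ∈ Lℤ`, and `π` is either `0` or `L/2` modulo `L`. -/

namespace AddCircle

variable {𝕜 : Type*} [Field 𝕜] [LinearOrder 𝕜] [IsStrictOrderedRing 𝕜] {p : 𝕜}

theorem exists_pos_nat_eq_div_of_coe_eq_zero (hp : 0 < p) {x : 𝕜} (hx : 0 < x)
    (h : (x : AddCircle p) = 0) : ∃ n : ℕ, 0 < n ∧ p = x / n := by
  obtain ⟨n, rfl⟩ := (coe_eq_zero_of_pos_iff p hp hx).mp h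
  have hn : 0 < n := Nat.pos_of_ne_zero (by rintro rfl; simp at hx)
  exact ⟨n, hn, by rw [nsmul_eq_mul, mul_div_cancel_left₀ _ (by positivity)]⟩

theorem eq_zero_or_eq_half_of_two_nsmul_eq_zero [Fact (0 < p)] [Archimedean 𝕜]
    {u : AddCircle p} (h : 2 • u = 0) : u = 0 ∨ u = ((p / 2 : 𝕜) : AddCircle p) := by
  obtain ⟨m, hm, rfl⟩ := (AddCircle.nsmul_eq_zero_iff two_pos).mp h
  interval_cases m
  · simp
  · right; rw [Nat.cast_one, Nat.cast_two, one_div_mul_eq_div]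

end AddCircle

theorem tat_circle (L : ℝ) (hL : 0 < L)
    (htat : ∀ p : AddCircle L, p + ((Real.pi : ℝ) : AddCircle L)
      = p - ((Real.pi : ℝ) : AddCircle L)) :
    -- the total length is 2π/n for some positive integer n
    (∃ n : ℕ, 0 < n ∧ L = 2 * Real.pi / n) ∧
    -- σ_Γ is the identity or the rotation by half the total length
    ((∀ p : AddCircle L, p + ((Real.pi : ℝ) : AddCircle L) = p) ∨
     (∀ p : AddCircle L, p + ((Real.pi : ℝ) : AddCircle L)
        = p + ((L / 2 : ℝ) : AddCircle L))) := by
  have : Fact (0 < L) := ⟨hL⟩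
  have hπ_order : 2 • ((Real.pi : ℝ) : AddCircle L) = 0 :=
    (two_nsmul _).trans (eq_neg_iff_add_eq_zero.mp (by simpa using htat 0))
  have h2π : ((2 * Real.pi : ℝ) : AddCircle L) = 0 := by
    rw [← hπ_order, ← AddCircle.coe_nsmul, two_nsmul, two_mul]
  refine ⟨AddCircle.exists_pos_nat_eq_div_of_coe_eq_zero hL (by positivity) h2π, ?_⟩
  rcases AddCircle.eq_zero_or_eq_half_of_two_nsmul_eq_zero hπ_order with hπ | hπ
  · exact Or.inl fun p => by rw [hπ, add_zero]
  · exact Or.inr fun p => by rw [hπ]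
end

section
/- In a mixed tête-à-tête graph, every mixed safe walk has order equal to c_p: if (Γ^•, A^•, δ_•) satisfies the relative mixed tête-à-tête property, then for every point p in Γ minus the vertices, the mixed safe walks γ_p and ω_p starting at p both have order c_p, where c_p is the largest index i with p ∈ Γ^i. -/
/-!
Mixed tête-à-tête graphs.  A filtered relative metric ribbon graph is a
decreasing filtration `(Γ,A) = (Γ⁰,A⁰) ⊃ (Γ¹,A¹) ⊃ ⋯ ⊃ (Γ^d,A^d)` of relative
metric ribbon graphs with locally constant length functions `δ_i : Γ^i → ℝ≥0`,
`δ₀ > 0`.  We model it abstractly: `F i` is the `i`-th level of the filtration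
(a subspace of the metric space `Γ`), `A i` its relative part, `walk i p dir`
is the safe walk in `Γ^i` from `p` in direction `dir`, and the mixed safe walk
from `(p, dir)` is encoded by the sequence `seg p dir j` of starting points of
its constituent safe walks (with running directions `segDir p dir j`), as in
its recursive definition:
`seg p dir (j+1)` is the endpoint of a safe walk in `Γ^j` of length
`δ_j(seg p dir j)` starting at `seg p dir j`. -/
structure MixedTatGraph (Γ : Type*) [MetricSpace Γ] where
  V : Finset Γ
  /-- depth of the filtration -/
  d : ℕ
  /-- the filtration `Γ^i` -/
  F : ℕ → Set Γ
  /-- the relative parts `A^i` -/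
  A : ℕ → Set Γ
  F_zero : F 0 = Set.univ
  F_antitone : ∀ i j, i ≤ j → F j ⊆ F i
  A_antitone : ∀ i j, i ≤ j → A j ⊆ A i
  A_sub : ∀ i, A i ⊆ F i
  /-- the (locally constant) length functions `δ_i` -/
  δ : ℕ → Γ → ℝ
  δ_nonneg : ∀ i p, 0 ≤ δ i p
  δ_zero_pos : ∀ p, 0 < δ 0 p
  δ_locConst : ∀ i p q, p ∈ F i → q ∈ F i →
    connectedComponentIn (F i) p = connectedComponentIn (F i) q → δ i p = δ i q
  /-- the safe walk in `Γ^i` from `p` in direction `dir` -/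
  walk : ℕ → Γ → Bool → ℝ → Γ
  walk_zero : ∀ i p dir, walk i p dir 0 = p
  walk_mem : ∀ i p dir t, p ∈ F i → 0 ≤ t → walk i p dir t ∈ F i
  walk_cont : ∀ i p dir, Continuous (walk i p dir)
  walk_unit_speed : ∀ i p dir t, 0 ≤ t → ∃ ε > 0, ∀ s, 0 ≤ s → |s - t| < ε →
    dist (walk i p dir s) (walk i p dir t) = |s - t|
  /-- starting points of the constituent safe walks of the mixed safe walk -/
  seg : Γ → Bool → ℕ → Γ
  /-- running directions of the constituent safe walks -/
  segDir : Γ → Bool → ℕ → Bool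
  seg_zero : ∀ p dir, seg p dir 0 = p
  segDir_zero : ∀ p dir, segDir p dir 0 = dir
  seg_succ : ∀ p dir j,
    seg p dir (j + 1) = walk j (seg p dir j) (segDir p dir j) (δ j (seg p dir j))

variable {Γ : Type*} [MetricSpace Γ]

/-- `c_p`: the largest `i ≤ d` with `p ∈ Γ^i`. -/
noncomputable def MixedTatGraph.level (G : MixedTatGraph Γ) (p : Γ) : ℕ :=
  sSup {i | i ≤ G.d ∧ p ∈ G.F i}

/-- The order of the mixed safe walk from `(p, dir)`: the index of its last
constituent safe walk, i.e. the least `i` such that the algorithm stops after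
constructing `γ_p^i` (because `i+1 > c_p` or the endpoint of `γ_p^i` is not in
`Γ^{i+1}`). -/
noncomputable def MixedTatGraph.order (G : MixedTatGraph Γ) (p : Γ)
    (dir : Bool) : ℕ :=
  sInf {i | G.level p < i + 1 ∨ G.seg p dir (i + 1) ∉ G.F (i + 1)}

/-- The endpoint of the mixed safe walk from `(p, dir)`. -/
noncomputable def MixedTatGraph.endpoint (G : MixedTatGraph Γ) (p : Γ)
    (dir : Bool) : Γ :=
  G.seg p dir (G.order p dir + 1)

/-- The relative mixed tête-à-tête property (conditions (I) and (II) for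
interior points; the boundary condition (III) concerns the boundary mixed
safe walks starting on `A⁰`). -/
def MixedTatProperty (G : MixedTatGraph Γ) : Prop :=
  ∀ p, p ∉ G.V → p ∉ G.A 0 →
    -- (I) the two mixed safe walks from p have the same endpoint
    G.endpoint p true = G.endpoint p false ∧
    -- (II) the level of the common endpoint equals the level of p
    (∀ dir, G.level (G.endpoint p dir) = G.level p)

/-!
The order of a mixed safe walk never exceeds `c_p`, and it can only stop early at a
constituent walk whose endpoint leaves the next level of the filtration. Condition (II)
puts the endpoint in `Γ^{c_p}`, hence in every earlier level, so the walk cannot stop early.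
-/

namespace MixedTatGraph

variable (G : MixedTatGraph Γ)

theorem mem_F_level (q : Γ) : q ∈ G.F (G.level q) :=
  (Nat.sSup_mem (s := {i | i ≤ G.d ∧ q ∈ G.F i}) ⟨0, Nat.zero_le _, by simp [G.F_zero]⟩
    ⟨G.d, fun _ hi => hi.1⟩).2

theorem order_le_level (p : Γ) (dir : Bool) : G.order p dir ≤ G.level p :=
  Nat.sInf_le (Or.inl (Nat.lt_succ_self _))

theorem level_le_order_of_endpoint_mem {p : Γ} {dir : Bool}
    (h : G.endpoint p dir ∈ G.F (G.order p dir + 1)) : G.level p ≤ G.order p dir := by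
  have hstop := Nat.sInf_mem (⟨G.level p, Or.inl (Nat.lt_succ_self _)⟩ :
    {i | G.level p < i + 1 ∨ G.seg p dir (i + 1) ∉ G.F (i + 1)}.Nonempty)
  rcases hstop with hlt | hnot
  · exact Nat.lt_succ_iff.mp hlt
  · exact absurd h hnot

theorem order_eq_level_of_level_le_level_endpoint {p : Γ} {dir : Bool}
    (h : G.level p ≤ G.level (G.endpoint p dir)) : G.order p dir = G.level p := by
  refine (G.order_le_level p dir).antisymm (not_lt.mp fun hlt => ?_)
  have hmem : G.endpoint p dir ∈ G.F (G.order p dir + 1) :=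
    G.F_antitone _ _ (hlt.trans_le h) (G.mem_F_level _)
  exact hlt.not_ge (G.level_le_order_of_endpoint_mem hmem)

end MixedTatGraph

theorem mixed_safe_walk_order_eq_level (G : MixedTatGraph Γ)
    (htat : MixedTatProperty G) :
    ∀ p, p ∉ G.V → p ∉ G.A 0 → ∀ dir,
      G.order p dir = G.level p := by
  intro p hpV hpA dir
  exact G.order_eq_level_of_level_le_level_endpoint ((htat p hpV hpA).2 dir).ge
end
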